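/- arXiv:2006.01909 — 5 statements merged into one kernel-verified Lean document; each statement's English description precedes it below -/
import Mathlib

section
/- Let n ≥ 3 and let Z be a function from the set of polytopes in ℝⁿ containing the origin to ℝⁿ satisfying Z(φP) = φ^{-T} Z(P) for all φ ∈ SL(n,ℝ). Then there exists a ∈ ℝ such that Z(Tⁿ) = a·(1,1,…,1)ᵀ, where Tⁿ = conv{0, e₁, …, eₙ} is the standard simplex. -/
/-! Even permutation matrices lie in `SL(n, ℝ)`, permute the vertices of `Tⁿ` and are their own
inverse transpose. Contravariance therefore makes the coordinates of `Z(Tⁿ)` invariant under the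
alternating group, which acts transitively on `Fin n` once `n ≥ 3`. -/

open scoped RealInnerProductSpace

noncomputable section

/-- Euclidean n-space. -/
abbrev E (n : ℕ) := EuclideanSpace ℝ (Fin n)

/-- A (convex) polytope: convex hull of a nonempty finite set. -/
def IsPolytope {n : ℕ} (P : Set (E n)) : Prop :=
  ∃ S : Finset (E n), S.Nonempty ∧ P = convexHull ℝ (S : Set (E n))

/-- Support function. -/
def suppFn {n : ℕ} (P : Set (E n)) (u : E n) : ℝ :=
  sSup ((fun x => ⟪x, u⟫) '' P)

/-- The face of `P` in direction `u`. -/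
def face {n : ℕ} (P : Set (E n)) (u : E n) : Set (E n) :=
  {x ∈ P | ⟪x, u⟫ = suppFn P u}

/-- Dimension of a set: rank of the direction of its affine span. -/
def polyDim {n : ℕ} (P : Set (E n)) : ℕ :=
  Module.finrank ℝ (affineSpan ℝ P).direction

/-- The set of outer unit facet normals of `P`. -/
def normals {n : ℕ} (P : Set (E n)) : Set (E n) :=
  {u | ‖u‖ = 1 ∧ polyDim (face P u) = n - 1}

/-- `a_P(u)`: the (n-1)-dimensional Hausdorff measure of the facet `F(P,u)`. -/
def facetArea {n : ℕ} (P : Set (E n)) (u : E n) : ℝ :=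
  (MeasureTheory.Measure.hausdorffMeasure ((n : ℝ) - 1) (face P u)).toReal

/-- `V(P,u)`: volume of the cone `conv{0, F(P,u)}`. -/
def coneVol {n : ℕ} (P : Set (E n)) (u : E n) : ℝ :=
  (MeasureTheory.volume (convexHull ℝ ({0} ∪ face P u))).toReal

/-- Facet normals whose facet does not contain the origin in its affine hull. -/
def goodNormals {n : ℕ} (P : Set (E n)) : Set (E n) :=
  {u ∈ normals P | (0 : E n) ∉ affineSpan ℝ (face P u)}

/-- The facet vector `fv_ζ`. -/
def fv {n : ℕ} (ζ : ℝ → ℝ) (P : Set (E n)) : E n :=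
  ∑ᶠ u ∈ goodNormals P, (ζ (coneVol P u) / suppFn P u) • u

/-- The linear action of a matrix on Euclidean space. -/
def act {n : ℕ} (M : Matrix (Fin n) (Fin n) ℝ) : E n →ₗ[ℝ] E n :=
  Matrix.toEuclideanLin M

/-- Inverse transpose of a matrix. -/
def invT {n : ℕ} (M : Matrix (Fin n) (Fin n) ℝ) : Matrix (Fin n) (Fin n) ℝ :=
  (M⁻¹).transpose

/-- The `k`-dimensional standard simplex `T^k = conv{0, e₁, …, e_k}` in `ℝⁿ`. -/
def Tk (n k : ℕ) : Set (E n) :=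
  convexHull ℝ ({0} ∪ (fun i : Fin n => EuclideanSpace.single i (1 : ℝ)) '' {i | (i : ℕ) < k})

open Matrix

section Permutation

variable {n : ℕ}

lemma act_permMatrix_apply (σ : Equiv.Perm (Fin n)) (x : E n) (i : Fin n) :
    act (σ.permMatrix ℝ) x i = x (σ i) := by
  simp [act, toLpLin_apply, permMatrix_mulVec]

lemma act_permMatrix_single (σ : Equiv.Perm (Fin n)) (j : Fin n) :
    act (σ.permMatrix ℝ) (EuclideanSpace.single j 1) = EuclideanSpace.single (σ⁻¹ j) 1 := by
  ext i
  simp [act_permMatrix_apply, Equiv.eq_symm_apply]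

lemma inv_permMatrix {m R : Type*} [Fintype m] [DecidableEq m] [CommRing R] (σ : Equiv.Perm m) :
    (σ.permMatrix R)⁻¹ = σ⁻¹.permMatrix R :=
  inv_eq_left_inv (by rw [← permMatrix_mul, mul_inv_cancel, permMatrix_one])

lemma invT_permMatrix (σ : Equiv.Perm (Fin n)) : invT (σ.permMatrix ℝ) = σ.permMatrix ℝ := by
  rw [invT, inv_permMatrix, transpose_permMatrix, inv_inv]

def alternatingPermMatrix (σ : alternatingGroup (Fin n)) : SpecialLinearGroup (Fin n) ℝ :=
  ⟨(σ : Equiv.Perm (Fin n)).permMatrix ℝ, by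
    simp [det_permutation, Equiv.Perm.mem_alternatingGroup.mp σ.2]⟩

end Permutation

section Simplex

variable {n : ℕ}

lemma Tk_eq_convexHull_finset (k : ℕ) : Tk n k = convexHull ℝ
    ((insert 0 ({i : Fin n | (i : ℕ) < k}.toFinset.image
      fun i => EuclideanSpace.single i (1 : ℝ)) : Finset (E n)) : Set (E n)) := by
  simp only [Tk, Finset.coe_insert, Finset.coe_image, Set.coe_toFinset, Set.insert_eq]

lemma isPolytope_Tk (k : ℕ) : IsPolytope (Tk n k) :=
  ⟨_, Finset.insert_nonempty _ _, Tk_eq_convexHull_finset k⟩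

lemma zero_mem_Tk (k : ℕ) : (0 : E n) ∈ Tk n k :=
  subset_convexHull ℝ _ (Or.inl rfl)

lemma Tk_self :
    Tk n n = convexHull ℝ ({0} ∪ Set.range fun i : Fin n => EuclideanSpace.single i 1) := by
  simp [Tk]

lemma act_permMatrix_image_Tk_self (σ : Equiv.Perm (Fin n)) :
    act (σ.permMatrix ℝ) '' Tk n n = Tk n n := by
  rw [Tk_self, LinearMap.image_convexHull, Set.image_union, Set.image_singleton, map_zero,
    ← Set.range_comp]
  have : (act (σ.permMatrix ℝ) ∘ fun i : Fin n => EuclideanSpace.single i (1 : ℝ)) =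
      (fun i => EuclideanSpace.single i 1) ∘ ⇑σ⁻¹ :=
    funext (act_permMatrix_single σ)
  rw [this, EquivLike.range_comp]

end Simplex

lemma apply_alternatingGroup_eq {n : ℕ} {Z : Set (E n) → E n}
    (hZ : ∀ (φ : SpecialLinearGroup (Fin n) ℝ) (P : Set (E n)), IsPolytope P → (0 : E n) ∈ P →
      Z (act (φ : Matrix (Fin n) (Fin n) ℝ) '' P)
        = act (invT (φ : Matrix (Fin n) (Fin n) ℝ)) (Z P))
    (σ : alternatingGroup (Fin n)) (i : Fin n) :
    Z (Tk n n) i = Z (Tk n n) (σ • i) := by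
  have h := hZ (alternatingPermMatrix σ) (Tk n n) (isPolytope_Tk n) (zero_mem_Tk n)
  simp only [alternatingPermMatrix, act_permMatrix_image_Tk_self, invT_permMatrix] at h
  nth_rw 1 [h]
  exact act_permMatrix_apply _ _ _

/-- an SL(n) contravariant function on polytopes containing the origin
takes a multiple of `(1,…,1)` as value on the standard simplex `Tⁿ`. -/
theorem contravariant_value_on_simplex {n : ℕ} (hn : 3 ≤ n) (Z : Set (E n) → E n)
    (hZ : ∀ (φ : Matrix.SpecialLinearGroup (Fin n) ℝ) (P : Set (E n)),
      IsPolytope P → (0 : E n) ∈ P →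
      Z (act (φ : Matrix (Fin n) (Fin n) ℝ) '' P)
        = act (invT (φ : Matrix (Fin n) (Fin n) ℝ)) (Z P)) :
    ∃ a : ℝ, ∀ i : Fin n, Z (Tk n n) i = a := by
  have := alternatingGroup.isPretransitive_of_three_le_card (Fin n) (by simpa using hn)
  refine ⟨Z (Tk n n) ⟨0, by omega⟩, fun i => ?_⟩
  obtain ⟨σ, rfl⟩ := MulAction.exists_smul_eq (alternatingGroup (Fin n)) ⟨0, by omega⟩ i
  exact (apply_alternatingGroup_eq hZ σ _).symm
end
end

section
/- For convex polytopes P, Q in ℝⁿ with P ∪ Q convex, the set of outer unit facet normals satisfies N(P∪Q) ∪ N(P∩Q) = N(P) ∪ N(Q). -/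
open scoped RealInnerProductSpace

noncomputable section

/-! Compare `h_P(u)` and `h_Q(u)`. If `h_P(u) < h_Q(u)`, then `F(P ∪ Q, u) = F(Q, u)` and
`F(P ∩ Q, u) = F(P, u)`: the segment from a point `x` of `F(P, u)` to `F(Q, u)` lies in the
connected set `P ∪ Q`, so it meets `P ∩ Q`, and only its endpoint `x` can lie in `P`. If
`h_P(u) = h_Q(u)`, then `F(P ∪ Q, u) = F(P, u) ∪ F(Q, u)` is convex, hence contained in the affine
hull of one of the two faces, while `F(P ∩ Q, u) = F(P, u) ∩ F(Q, u)`. Since every face lies in a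
hyperplane, counting dimensions concludes. -/

open Set

theorem Convex.subset_or_subset_of_subset_union_affineSubspace {V : Type*} [AddCommGroup V]
    [Module ℝ V] {C : Set V} (hC : Convex ℝ C) {S₁ S₂ : AffineSubspace ℝ V}
    (h : C ⊆ S₁ ∪ S₂) : C ⊆ S₁ ∨ C ⊆ S₂ := by
  by_contra! hC'
  obtain ⟨⟨a, haC, haS₁⟩, ⟨b, hbC, hbS₂⟩⟩ := And.imp not_subset.mp not_subset.mp hC'
  have haS₂ : a ∈ S₂ := (h haC).resolve_left haS₁
  have hbS₁ : b ∈ S₁ := (h hbC).resolve_right hbS₂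
  have hab : a ≠ b := fun hab => haS₁ (hab ▸ hbS₁)
  rcases h (hC.segment_subset haC hbC (midpoint_mem_segment a b)) with hm | hm
  · exact haS₁ (S₁.right_mem_of_wbtw (wbtw_midpoint ℝ a b).symm hbS₁ hm
      ((right_eq_midpoint_iff ℝ).not.mpr hab))
  · exact hbS₂ (S₂.right_mem_of_wbtw (wbtw_midpoint ℝ a b) haS₂ hm
      ((left_eq_midpoint_iff ℝ).not.mpr hab))

theorem exists_mem_segment_inter_of_convex_union {V : Type*} [AddCommGroup V] [Module ℝ V]
    [TopologicalSpace V] [IsTopologicalAddGroup V] [ContinuousSMul ℝ V] {P Q : Set V}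
    (hPQ : Convex ℝ (P ∪ Q)) (hP : IsClosed P) (hQ : IsClosed Q) {x y : V} (hx : x ∈ P)
    (hy : y ∈ Q) : ∃ z ∈ segment ℝ x y, z ∈ P ∩ Q :=
  isPreconnected_closed_iff.mp (convex_segment x y).isPreconnected P Q hP hQ
    (hPQ.segment_subset (.inl hx) (.inr hy)) ⟨x, left_mem_segment ℝ x y, hx⟩
    ⟨y, right_mem_segment ℝ x y, hy⟩

variable {n : ℕ}

theorem IsPolytope.isCompact {P : Set (E n)} (h : IsPolytope P) : IsCompact P := by
  obtain ⟨S, -, rfl⟩ := h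
  exact S.finite_toSet.isCompact_convexHull ℝ

theorem IsPolytope.nonempty {P : Set (E n)} (h : IsPolytope P) : P.Nonempty := by
  obtain ⟨S, hS, rfl⟩ := h
  exact (Finset.coe_nonempty.mpr hS).mono (subset_convexHull ℝ _)

section Dimension

theorem polyDim_le_of_subset_affineSpan {A B : Set (E n)} (h : A ⊆ affineSpan ℝ B) :
    polyDim A ≤ polyDim B :=
  Submodule.finrank_mono (AffineSubspace.direction_le (affineSpan_le.mpr h))

theorem polyDim_mono {A B : Set (E n)} (h : A ⊆ B) : polyDim A ≤ polyDim B :=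
  polyDim_le_of_subset_affineSpan (h.trans (subset_affineSpan ℝ B))

theorem polyDim_union_of_convex {A B : Set (E n)} (h : Convex ℝ (A ∪ B)) :
    polyDim (A ∪ B) = max (polyDim A) (polyDim B) := by
  refine le_antisymm ?_ (max_le (polyDim_mono subset_union_left) (polyDim_mono subset_union_right))
  rcases h.subset_or_subset_of_subset_union_affineSubspace
    (union_subset_union (subset_affineSpan ℝ A) (subset_affineSpan ℝ B)) with hA | hB
  · exact (polyDim_le_of_subset_affineSpan hA).trans (le_max_left _ _)
  · exact (polyDim_le_of_subset_affineSpan hB).trans (le_max_right _ _)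

theorem polyDim_face_le (P : Set (E n)) {u : E n} (hu : u ≠ 0) : polyDim (face P u) ≤ n - 1 := by
  have hdir : (affineSpan ℝ (face P u)).direction ≤ (ℝ ∙ u)ᗮ := by
    rw [direction_affineSpan, vectorSpan_def, Submodule.span_le]
    rintro _ ⟨x, hx, y, hy, rfl⟩
    rw [SetLike.mem_coe, Submodule.mem_orthogonal_singleton_iff_inner_left]
    change ⟪x - y, u⟫ = 0
    rw [inner_sub_left, hx.2, hy.2, sub_self]
  have hsum := (ℝ ∙ u).finrank_add_finrank_orthogonal
  rw [finrank_span_singleton hu, finrank_euclideanSpace_fin] at hsum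
  exact (Submodule.finrank_mono hdir).trans (by omega)

end Dimension

section Faces

variable {P Q : Set (E n)} {u : E n}

theorem inner_le_suppFn (hP : IsCompact P) {x : E n} (hx : x ∈ P) :
    ⟪x, u⟫ ≤ suppFn P u :=
  le_csSup (hP.image (f := fun y : E n => ⟪y, u⟫) (by fun_prop)).bddAbove ⟨x, hx, rfl⟩

theorem suppFn_eq_of_forall_inner_le {x : E n} (hx : x ∈ P) (h : ∀ y ∈ P, ⟪y, u⟫ ≤ ⟪x, u⟫) :
    suppFn P u = ⟪x, u⟫ :=
  IsGreatest.csSup_eq ⟨⟨x, hx, rfl⟩, by rintro _ ⟨y, hy, rfl⟩; exact h y hy⟩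

theorem face_nonempty (hP : IsCompact P) (hP₀ : P.Nonempty) : (face P u).Nonempty := by
  obtain ⟨x, hx, hmax⟩ := hP.exists_isMaxOn hP₀
    (f := fun y : E n => ⟪y, u⟫) (by fun_prop)
  exact ⟨x, hx, (suppFn_eq_of_forall_inner_le hx fun y hy => hmax hy).symm⟩

theorem Convex.face (hP : Convex ℝ P) : Convex ℝ (face P u) :=
  hP.inter <| convex_hyperplane (f := fun x : E n => ⟪x, u⟫)
    ⟨fun x y => inner_add_left x y u, fun c x => real_inner_smul_left x u c⟩ _

theorem suppFn_union (hP : IsCompact P) (hP₀ : P.Nonempty) (hQ : IsCompact Q)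
    (hQ₀ : Q.Nonempty) : suppFn (P ∪ Q) u = max (suppFn P u) (suppFn Q u) := by
  unfold suppFn
  rw [image_union, csSup_union (hP.image (f := fun y : E n => ⟪y, u⟫) (by fun_prop)).bddAbove
    (hP₀.image _) (hQ.image (f := fun y : E n => ⟪y, u⟫) (by fun_prop)).bddAbove (hQ₀.image _)]

theorem face_union_of_suppFn_lt (hP : IsCompact P) (hP₀ : P.Nonempty) (hQ : IsCompact Q)
    (hQ₀ : Q.Nonempty) (hlt : suppFn P u < suppFn Q u) : face (P ∪ Q) u = face Q u := by
  ext x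
  simp only [face, suppFn_union hP hP₀ hQ hQ₀, max_eq_right hlt.le, mem_union, mem_ofPred]
  constructor
  · rintro ⟨hx, hxu⟩
    refine ⟨hx.resolve_left fun hxP => ?_, hxu⟩
    exact (inner_le_suppFn hP hxP).not_gt (hxu ▸ hlt)
  · rintro ⟨hx, hxu⟩
    exact ⟨.inr hx, hxu⟩

theorem face_union_of_suppFn_eq (hP : IsCompact P) (hP₀ : P.Nonempty) (hQ : IsCompact Q)
    (hQ₀ : Q.Nonempty) (heq : suppFn P u = suppFn Q u) :
    face (P ∪ Q) u = face P u ∪ face Q u := by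
  ext x
  simp only [face, suppFn_union hP hP₀ hQ hQ₀, ← heq, max_self, mem_union, mem_ofPred]
  tauto

theorem face_inter_of_mem (hP : IsCompact P) {z : E n} (hz : z ∈ face P u) (hzQ : z ∈ Q) :
    face (P ∩ Q) u = face P u ∩ Q := by
  have hsupp : suppFn (P ∩ Q) u = suppFn P u :=
    (suppFn_eq_of_forall_inner_le (P := P ∩ Q) ⟨hz.1, hzQ⟩
      fun y hy => (inner_le_suppFn hP hy.1).trans hz.2.ge).trans hz.2
  ext x
  simp only [face, hsupp, mem_inter_iff, mem_ofPred]
  tauto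

theorem face_subset_of_suppFn_lt (hPQ : Convex ℝ (P ∪ Q)) (hP : IsCompact P) (hQ : IsCompact Q)
    (hQ₀ : Q.Nonempty) (hlt : suppFn P u < suppFn Q u) : face P u ⊆ Q := by
  intro x hx
  obtain ⟨y, hy⟩ : (face Q u).Nonempty := face_nonempty hQ hQ₀
  obtain ⟨z, ⟨a, b, -, hb, hab, rfl⟩, hzP, hzQ⟩ :=
    exists_mem_segment_inter_of_convex_union hPQ hP.isClosed hQ.isClosed hx.1 hy.1
  have hzu : a * suppFn P u + b * suppFn Q u ≤ suppFn P u := by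
    simpa only [inner_add_left, real_inner_smul_left, hx.2, hy.2] using
      inner_le_suppFn hP hzP (u := u)
  have hb₀ : b * (suppFn Q u - suppFn P u) ≤ 0 := by linear_combination hzu - suppFn P u * hab
  obtain rfl : b = 0 := le_antisymm (nonpos_of_mul_nonpos_left hb₀ (sub_pos.mpr hlt)) hb
  rwa [zero_smul, add_zero, show a = 1 by linarith, one_smul] at hzQ

theorem exists_mem_face_inter_of_suppFn_eq (hPQ : Convex ℝ (P ∪ Q)) (hP : IsCompact P)
    (hP₀ : P.Nonempty) (hQ : IsCompact Q) (hQ₀ : Q.Nonempty) (heq : suppFn P u = suppFn Q u) :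
    ∃ z ∈ face P u, z ∈ Q := by
  obtain ⟨x, hx⟩ : (face P u).Nonempty := face_nonempty hP hP₀
  obtain ⟨y, hy⟩ : (face Q u).Nonempty := face_nonempty hQ hQ₀
  obtain ⟨z, ⟨a, b, -, -, hab, rfl⟩, hzP, hzQ⟩ :=
    exists_mem_segment_inter_of_convex_union hPQ hP.isClosed hQ.isClosed hx.1 hy.1
  refine ⟨_, ⟨hzP, ?_⟩, hzQ⟩
  rw [inner_add_left, real_inner_smul_left, real_inner_smul_left, hx.2, hy.2, ← heq, ← add_mul,
    hab, one_mul]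

theorem face_inter_of_suppFn_lt (hPQ : Convex ℝ (P ∪ Q)) (hP : IsCompact P) (hP₀ : P.Nonempty)
    (hQ : IsCompact Q) (hQ₀ : Q.Nonempty) (hlt : suppFn P u < suppFn Q u) :
    face (P ∩ Q) u = face P u := by
  have hsub := face_subset_of_suppFn_lt hPQ hP hQ hQ₀ hlt
  obtain ⟨x, hx⟩ : (face P u).Nonempty := face_nonempty hP hP₀
  rw [face_inter_of_mem hP hx (hsub hx), inter_eq_left.mpr hsub]

theorem face_inter_of_suppFn_eq (hPQ : Convex ℝ (P ∪ Q)) (hP : IsCompact P) (hP₀ : P.Nonempty)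
    (hQ : IsCompact Q) (hQ₀ : Q.Nonempty) (heq : suppFn P u = suppFn Q u) :
    face (P ∩ Q) u = face P u ∩ face Q u := by
  obtain ⟨z, hz, hzQ⟩ := exists_mem_face_inter_of_suppFn_eq hPQ hP hP₀ hQ hQ₀ heq
  rw [face_inter_of_mem hP hz hzQ]
  ext x
  simp only [face, ← heq, mem_inter_iff, mem_ofPred]
  tauto

end Faces

theorem facet_union_or_inter_iff_of_suppFn_le {P Q : Set (E n)} (hPQ : Convex ℝ (P ∪ Q))
    (hP : IsCompact P) (hP₀ : P.Nonempty) (hQ : IsCompact Q) (hQ₀ : Q.Nonempty) {u : E n}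
    (hu : u ≠ 0) (hle : suppFn P u ≤ suppFn Q u) :
    (polyDim (face (P ∪ Q) u) = n - 1 ∨ polyDim (face (P ∩ Q) u) = n - 1) ↔
      (polyDim (face P u) = n - 1 ∨ polyDim (face Q u) = n - 1) := by
  rcases hle.lt_or_eq with hlt | heq
  · rw [face_union_of_suppFn_lt hP hP₀ hQ hQ₀ hlt, face_inter_of_suppFn_lt hPQ hP hP₀ hQ hQ₀ hlt]
    exact or_comm
  · have hunion := face_union_of_suppFn_eq hP hP₀ hQ hQ₀ heq
    have hdim_union :
        polyDim (face (P ∪ Q) u) = max (polyDim (face P u)) (polyDim (face Q u)) := by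
      rw [hunion, polyDim_union_of_convex (hunion ▸ hPQ.face)]
    have hdim_inter : polyDim (face (P ∩ Q) u) ≤ polyDim (face P u) := by
      rw [face_inter_of_suppFn_eq hPQ hP hP₀ hQ hQ₀ heq]
      exact polyDim_mono inter_subset_left
    have hP_le := polyDim_face_le P hu
    have hQ_le := polyDim_face_le Q hu
    omega

theorem facet_union_or_inter_iff {P Q : Set (E n)} (hPQ : Convex ℝ (P ∪ Q)) (hP : IsCompact P)
    (hP₀ : P.Nonempty) (hQ : IsCompact Q) (hQ₀ : Q.Nonempty) {u : E n} (hu : u ≠ 0) :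
    (polyDim (face (P ∪ Q) u) = n - 1 ∨ polyDim (face (P ∩ Q) u) = n - 1) ↔
      (polyDim (face P u) = n - 1 ∨ polyDim (face Q u) = n - 1) := by
  rcases le_total (suppFn P u) (suppFn Q u) with hle | hle
  · exact facet_union_or_inter_iff_of_suppFn_le hPQ hP hP₀ hQ hQ₀ hu hle
  · rw [union_comm, inter_comm, or_comm (a := polyDim (face P u) = n - 1)]
    exact facet_union_or_inter_iff_of_suppFn_le (union_comm P Q ▸ hPQ) hQ hQ₀ hP hP₀ hu hle

/-- `N(P∪Q) ∪ N(P∩Q) = N(P) ∪ N(Q)` for polytopes with convex union. -/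
theorem normals_union_inter {n : ℕ} (P Q : Set (E n))
    (hP : IsPolytope P) (hQ : IsPolytope Q) (hPQ : Convex ℝ (P ∪ Q)) :
    normals (P ∪ Q) ∪ normals (P ∩ Q) = normals P ∪ normals Q := by
  ext u
  by_cases hu : ‖u‖ = 1
  · have hu₀ : u ≠ 0 := norm_ne_zero_iff.mp (hu ▸ one_ne_zero)
    simp only [normals, mem_union, mem_ofPred, hu, true_and]
    exact facet_union_or_inter_iff hPQ hP.isCompact hP.nonempty hQ.isCompact hQ.nonempty hu₀
  · simp [normals, hu]
end
end

section
/- Let ζ : [0,∞) → ℝ be a solution of Cauchy's functional equation. Define the facet vector fv_ζ(P) = Σ_u ζ(V(P,u))/h_P(u) · u, where the sum is over all outer unit facet normals u of P such that the origin is not in the affine hull of the facet F(P,u). Then fv_ζ(φP) = φ^{-T} fv_ζ(P) for every convex polytope P in ℝⁿ and every φ ∈ SL(n,ℝ). -/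
open scoped RealInnerProductSpace

noncomputable section

/-! A linear map `M` with `|det M| = 1` sends the face `F(P,u)` to the face of `M P` with unit
normal `M^{-T} u / ‖M^{-T} u‖`; this normal map is a bijection between the facet normals of `P`
and of `M P` counted in `fv`, with inverse `v ↦ Mᵀ v / ‖Mᵀ v‖`. The map `M` preserves the
dimension of the facet, whether `0` lies in its affine hull, and the volume of `conv{0, F}`,
while `h_{MP}(M^{-T} u / ‖M^{-T} u‖) = h_P(u) / ‖M^{-T} u‖`. So each summand of `fv_ζ(MP)` is
`M^{-T}` applied to the corresponding summand of `fv_ζ(P)`. -/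

open NormedSpace Function
open scoped Matrix

section LinearAction

variable {n : ℕ}

lemma act_mul_apply (M N : Matrix (Fin n) (Fin n) ℝ) (x : E n) :
    act (M * N) x = act M (act N x) := by
  simp [act]

lemma act_one_apply (x : E n) : act (1 : Matrix (Fin n) (Fin n) ℝ) x = x := by
  simp [act]

lemma inner_act (M : Matrix (Fin n) (Fin n) ℝ) (x y : E n) :
    ⟪act M x, y⟫ = ⟪x, act Mᵀ y⟫ := by
  rw [act, act, ← Matrix.conjTranspose_eq_transpose_of_trivial,
    Matrix.toEuclideanLin_conjTranspose_eq_adjoint, LinearMap.adjoint_inner_right]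

lemma det_act (M : Matrix (Fin n) (Fin n) ℝ) : LinearMap.det (act M) = M.det := by
  simp [act]

variable {M : Matrix (Fin n) (Fin n) ℝ}

lemma leftInverse_act_transpose_invT (hM : IsUnit M.det) :
    LeftInverse (act Mᵀ) (act (invT M)) := fun x => by
  rw [← act_mul_apply, invT, ← Matrix.transpose_mul, Matrix.nonsing_inv_mul _ hM,
    Matrix.transpose_one, act_one_apply]

lemma rightInverse_act_transpose_invT (hM : IsUnit M.det) :
    RightInverse (act Mᵀ) (act (invT M)) := fun x => by
  rw [← act_mul_apply, invT, ← Matrix.transpose_mul, Matrix.mul_nonsing_inv _ hM,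
    Matrix.transpose_one, act_one_apply]

lemma act_injective (hM : IsUnit M.det) : Injective (act M) := by
  refine LeftInverse.injective (g := act M⁻¹) fun x => ?_
  rw [← act_mul_apply, Matrix.nonsing_inv_mul _ hM, act_one_apply]

end LinearAction

section Faces

variable {n : ℕ}

lemma suppFn_act_image (M : Matrix (Fin n) (Fin n) ℝ) (P : Set (E n)) (v : E n) :
    suppFn (act M '' P) v = suppFn P (act Mᵀ v) := by
  simp only [suppFn, Set.image_image, inner_act]

open Pointwise in
lemma suppFn_smul (P : Set (E n)) {c : ℝ} (hc : 0 ≤ c) (u : E n) :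
    suppFn P (c • u) = c * suppFn P u := by
  have h : (fun x : E n => ⟪x, c • u⟫) '' P = c • (fun x : E n => ⟪x, u⟫) '' P := by
    rw [← Set.image_smul, Set.image_image]
    simp [inner_smul_right]
  rw [suppFn, h, Real.sSup_smul_of_nonneg hc, smul_eq_mul, suppFn]

lemma face_act_image (M : Matrix (Fin n) (Fin n) ℝ) (P : Set (E n)) (v : E n) :
    face (act M '' P) v = act M '' face P (act Mᵀ v) := by
  ext x
  constructor
  · rintro ⟨⟨y, hy, rfl⟩, he⟩
    exact ⟨y, ⟨hy, by rw [← inner_act, he, suppFn_act_image]⟩, rfl⟩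
  · rintro ⟨y, ⟨hy, he⟩, rfl⟩
    exact ⟨⟨y, hy, rfl⟩, by rw [inner_act, he, suppFn_act_image]⟩

lemma face_smul (P : Set (E n)) {c : ℝ} (hc : 0 < c) (u : E n) : face P (c • u) = face P u := by
  ext x
  simp only [face, Set.mem_ofPred_eq, inner_smul_right, suppFn_smul P hc.le,
    mul_right_inj' hc.ne']

lemma face_normalize (P : Set (E n)) (u : E n) : face P (normalize u) = face P u := by
  rcases eq_or_ne u 0 with rfl | hu
  · rw [normalize_zero_eq_zero]
  · exact face_smul P (inv_pos.2 (norm_pos_iff.2 hu)) u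

end Faces

section Invariance

variable {n : ℕ}

lemma polyDim_image_of_injective {f : E n →ₗ[ℝ] E n} (hf : Injective f) (s : Set (E n)) :
    polyDim (f '' s) = polyDim s := by
  rw [polyDim, polyDim, ← f.coe_toAffineMap, ← AffineSubspace.map_span,
    AffineSubspace.map_direction]
  exact (Submodule.equivMapOfInjective f hf _).finrank_eq.symm

lemma zero_mem_affineSpan_image_iff {f : E n →ₗ[ℝ] E n} (hf : Injective f) (s : Set (E n)) :
    (0 : E n) ∈ affineSpan ℝ (f '' s) ↔ (0 : E n) ∈ affineSpan ℝ s := by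
  rw [← f.coe_toAffineMap, ← AffineSubspace.map_span, AffineSubspace.mem_map]
  constructor
  · rintro ⟨y, hy, hy0⟩
    rwa [hf (hy0.trans f.map_zero.symm)] at hy
  · exact fun h => ⟨0, h, f.map_zero⟩

lemma volume_convexHull_zero_union_image {f : E n →ₗ[ℝ] E n} (hf : |LinearMap.det f| = 1)
    (s : Set (E n)) :
    MeasureTheory.volume (convexHull ℝ ({0} ∪ f '' s)) =
      MeasureTheory.volume (convexHull ℝ ({0} ∪ s)) := by
  rw [← f.map_zero, ← Set.image_singleton, ← Set.image_union, ← f.image_convexHull,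
    MeasureTheory.Measure.addHaar_image_linearMap, hf]
  simp

end Invariance

/-- Injectivity makes this hold also when the sums have infinite support (and are junk `0`). -/
lemma map_finsum_mem_of_injective {α M N F : Type*} [AddCommMonoid M] [AddCommMonoid N]
    [FunLike F M N] [AddMonoidHomClass F M N] (g : F) (hg : Injective g) (f : α → M) (s : Set α) :
    g (∑ᶠ i ∈ s, f i) = ∑ᶠ i ∈ s, g (f i) := by
  simpa only [finsum_mem_def, AddMonoidHom.coe_coe, map_indicator, comp_def] using
    (g : M →+ N).map_finsum_of_injective hg (s.indicator f)

lemma normalize_map_normalize_map {V : Type*} [NormedAddCommGroup V] [NormedSpace ℝ V]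
    {f g : V →ₗ[ℝ] V} (h : LeftInverse g f) {u : V} (hu : ‖u‖ = 1) :
    normalize (g (normalize (f u))) = u := by
  have hu0 : u ≠ 0 := norm_ne_zero_iff.1 (hu ▸ one_ne_zero)
  have hfu : f u ≠ 0 := fun h0 => hu0 (by rw [← h u, h0, map_zero])
  rw [show normalize (f u) = ‖f u‖⁻¹ • f u from rfl, map_smul, h u,
    normalize_smul_of_pos (inv_pos.2 (norm_pos_iff.2 hfu)), normalize_eq_self_of_norm_eq_one hu]

lemma isUnit_of_abs_eq_one {a : ℝ} (h : |a| = 1) : IsUnit a :=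
  isUnit_iff_ne_zero.2 (abs_ne_zero.1 (h ▸ one_ne_zero))

section NormalTransform

variable {n : ℕ} {M : Matrix (Fin n) (Fin n) ℝ}

/-- `M^{-T} u / ‖M^{-T} u‖`: the face of `M P` with this normal is `M F(P,u)`. -/
def actNormal (M : Matrix (Fin n) (Fin n) ℝ) (u : E n) : E n :=
  normalize (act (invT M) u)

lemma act_invT_ne_zero (hM : IsUnit M.det) {u : E n} (hu : u ≠ 0) : act (invT M) u ≠ 0 :=
  (map_ne_zero_iff _ (leftInverse_act_transpose_invT hM).injective).2 hu

lemma ne_zero_of_mem_goodNormals {P : Set (E n)} {u : E n} (hu : u ∈ goodNormals P) : u ≠ 0 :=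
  ne_zero_of_norm_ne_zero (hu.1.1.symm ▸ one_ne_zero)

lemma mem_goodNormals_iff_of_face_eq (hM : IsUnit M.det) {P Q : Set (E n)} {u v : E n}
    (hu : ‖u‖ = 1) (hv : ‖v‖ = 1) (hface : face Q v = act M '' face P u) :
    v ∈ goodNormals Q ↔ u ∈ goodNormals P := by
  simp only [goodNormals, normals, Set.mem_ofPred_eq, hu, hv, hface,
    polyDim_image_of_injective (act_injective hM), zero_mem_affineSpan_image_iff (act_injective hM)]

lemma face_act_image_actNormal (hM : IsUnit M.det) (P : Set (E n)) (u : E n) :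
    face (act M '' P) (actNormal M u) = act M '' face P u := by
  rw [actNormal, face_normalize, face_act_image, leftInverse_act_transpose_invT hM]

lemma suppFn_act_image_actNormal (hM : IsUnit M.det) (P : Set (E n)) (u : E n) :
    suppFn (act M '' P) (actNormal M u) = ‖act (invT M) u‖⁻¹ * suppFn P u := by
  rw [actNormal, NormedSpace.normalize, suppFn_smul _ (inv_nonneg.2 (norm_nonneg _)),
    suppFn_act_image, leftInverse_act_transpose_invT hM]

lemma coneVol_act_image_actNormal (hM : |M.det| = 1) (P : Set (E n)) (u : E n) :
    coneVol (act M '' P) (actNormal M u) = coneVol P u := by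
  rw [coneVol, face_act_image_actNormal (isUnit_of_abs_eq_one hM),
    volume_convexHull_zero_union_image (by rwa [det_act]), coneVol]

lemma bijOn_actNormal_goodNormals (hM : IsUnit M.det) (P : Set (E n)) :
    Set.BijOn (actNormal M) (goodNormals P) (goodNormals (act M '' P)) := by
  have hinv : Set.InvOn (fun v => normalize (act Mᵀ v)) (actNormal M)
      (goodNormals P) (goodNormals (act M '' P)) :=
    ⟨fun u hu => normalize_map_normalize_map (leftInverse_act_transpose_invT hM) hu.1.1,
      fun v hv => normalize_map_normalize_map (rightInverse_act_transpose_invT hM) hv.1.1⟩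
  refine hinv.bijOn (fun u hu => ?_) (fun v hv => ?_)
  · have hnorm := norm_normalize (act_invT_ne_zero hM (ne_zero_of_mem_goodNormals hu))
    exact (mem_goodNormals_iff_of_face_eq hM hu.1.1 hnorm
      (face_act_image_actNormal hM P u)).2 hu
  · have hTv : act Mᵀ v ≠ 0 := (map_ne_zero_iff _
      (rightInverse_act_transpose_invT hM).injective).2 (ne_zero_of_mem_goodNormals hv)
    refine (mem_goodNormals_iff_of_face_eq hM (norm_normalize hTv) hv.1.1 ?_).1 hv
    rw [face_normalize, face_act_image]

lemma fv_summand_act_image (hM : |M.det| = 1) (ζ : ℝ → ℝ) (P : Set (E n)) {u : E n}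
    (hu : u ≠ 0) :
    (ζ (coneVol (act M '' P) (actNormal M u)) / suppFn (act M '' P) (actNormal M u)) •
        actNormal M u =
      act (invT M) ((ζ (coneVol P u) / suppFn P u) • u) := by
  have hM' : IsUnit M.det := isUnit_of_abs_eq_one hM
  have hBu : ‖act (invT M) u‖ ≠ 0 := norm_ne_zero_iff.2 (act_invT_ne_zero hM' hu)
  rw [coneVol_act_image_actNormal hM, suppFn_act_image_actNormal hM', actNormal,
    NormedSpace.normalize, smul_smul, map_smul]
  congr 1
  field_simp

theorem fv_act_image (ζ : ℝ → ℝ) (P : Set (E n)) (hM : |M.det| = 1) :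
    fv ζ (act M '' P) = act (invT M) (fv ζ P) := by
  have hM' : IsUnit M.det := isUnit_of_abs_eq_one hM
  rw [fv, fv, map_finsum_mem_of_injective _ (leftInverse_act_transpose_invT hM').injective]
  exact (finsum_mem_eq_of_bijOn _ (bijOn_actNormal_goodNormals hM' P) fun u hu =>
    (fv_summand_act_image hM ζ P (ne_zero_of_mem_goodNormals hu)).symm).symm

end NormalTransform

theorem fv_contravariant_general {n : ℕ} (ζ : ℝ → ℝ)
    (P : Set (E n)) (φ : Matrix.SpecialLinearGroup (Fin n) ℝ) :
    fv ζ (act (φ : Matrix (Fin n) (Fin n) ℝ) '' P)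
      = act (invT (φ : Matrix (Fin n) (Fin n) ℝ)) (fv ζ P) :=
  fv_act_image ζ P (by rw [Matrix.SpecialLinearGroup.det_coe, abs_one])

/-- the facet vector is SL(n) contravariant. -/
theorem fv_contravariant {n : ℕ} (ζ : ℝ → ℝ)
    (hζ : ∀ a b : ℝ, 0 ≤ a → 0 ≤ b → ζ (a + b) = ζ a + ζ b)
    (P : Set (E n)) (hP : IsPolytope P) (φ : Matrix.SpecialLinearGroup (Fin n) ℝ) :
    fv ζ (act (φ : Matrix (Fin n) (Fin n) ℝ) '' P)
      = act (invT (φ : Matrix (Fin n) (Fin n) ℝ)) (fv ζ P) :=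
  fv_contravariant_general ζ P φ
end
end

section
/- For λ ∈ (0,1), let φ₁ ∈ SL(n,ℝ) be defined by φ₁e₁ = λe₁ + (1−λ)e₂, φ₁e₂ = e₂, φ₁eₙ = eₙ/λ, φ₁e_j = e_j otherwise, and let ψ₁ ∈ SL(n,ℝ) be defined by ψ₁e₁ = e₁, ψ₁e₂ = λe₁ + (1−λ)e₂, ψ₁eₙ = eₙ/(1−λ), ψ₁e_j = e_j otherwise. Then for 2 ≤ i < n and H the hyperplane through the origin with normal (1−λ)e₁ − λe₂: T^i ∩ H⁻ = φ₁T^i, T^i ∩ H⁺ = ψ₁T^i, and T^i ∩ H = φ₁ conv{0, e₁, e₃, …, e_i}, where H^± are the closed halfspaces bounded by H. -/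
open scoped RealInnerProductSpace

noncomputable section

/-- `hatT n i = conv{0, e₁, e₃, …, e_i}` (0-based indices `{0} ∪ {2,…,i-1}`). -/
def hatT (n i : ℕ) : Set (E n) :=
  convexHull ℝ ({0} ∪ (fun j : Fin n => EuclideanSpace.single j (1 : ℝ)) ''
    {j | (j : ℕ) = 0 ∨ (2 ≤ (j : ℕ) ∧ (j : ℕ) < i)})

/-- The matrix `φ₁`. -/
def phi1 (n : ℕ) (l : ℝ) : Matrix (Fin n) (Fin n) ℝ :=
  Matrix.of fun i j =>
    if (j : ℕ) = 0 then (if (i : ℕ) = 0 then l else if (i : ℕ) = 1 then 1 - l else 0)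
    else if (j : ℕ) = n - 1 then (if i = j then 1 / l else 0)
    else (if i = j then 1 else 0)

/-- The matrix `ψ₁`. -/
def psi1 (n : ℕ) (l : ℝ) : Matrix (Fin n) (Fin n) ℝ :=
  Matrix.of fun i j =>
    if (j : ℕ) = 1 then (if (i : ℕ) = 0 then l else if (i : ℕ) = 1 then 1 - l else 0)
    else if (j : ℕ) = n - 1 then (if i = j then 1 / (1 - l) else 0)
    else (if i = j then 1 else 0)

/-- The normal vector `(1-λ)e₁ - λe₂` of the hyperplane `H`. -/
def hNormal (n : ℕ) (l : ℝ) : E n :=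
  WithLp.toLp 2 (fun j : Fin n => if (j : ℕ) = 0 then 1 - l else if (j : ℕ) = 1 then -l else 0)

/-! On coordinates, `φ₁` is a shear: it sends `x` to `y` with `y₁ = λx₁`, `y₂ = x₂ + (1-λ)x₁`,
`yₙ = xₙ/λ` and `yⱼ = xⱼ` otherwise. It preserves the coordinate sum of points with `xₙ = 0`,
and every point of `T^i` has `xₙ = 0` because `i < n`. Moreover `⟪φ₁x, (1-λ)e₁ - λe₂⟫ = -λx₂`.
Hence the inequalities cutting out `T^i` are carried to those cutting out `T^i` except `x₂ ≥ 0`,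
which becomes `H⁻`; as `φ₁` is invertible, `φ₁ T^i = T^i ∩ H⁻`. Swapping `e₁` and `e₂` gives
`ψ₁ T^i = T^i ∩ H⁺`, and `x₂ = 0` cuts out `conv{0, e₁, e₃, …, e_i}`, giving `T^i ∩ H`. -/

def coordSimplex {n : ℕ} (s : Set (Fin n)) : Set (E n) :=
  convexHull ℝ ({0} ∪ (fun j : Fin n => EuclideanSpace.single j (1 : ℝ)) '' s)

lemma convex_setOf_nonneg_supp_sum_le_one {n : ℕ} (s : Set (Fin n)) :
    Convex ℝ {x : E n | (∀ j, 0 ≤ x j) ∧ (∀ j ∉ s, x j = 0) ∧ ∑ j, x j ≤ 1} := by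
  rintro p ⟨hp0, hps, hp1⟩ q ⟨hq0, hqs, hq1⟩ a b ha hb hab
  refine ⟨fun j => ?_, fun j hj => ?_, ?_⟩
  · simp only [PiLp.add_apply, PiLp.smul_apply, smul_eq_mul]
    have := hp0 j; have := hq0 j; positivity
  · simp [hps j hj, hqs j hj]
  · simp only [PiLp.add_apply, PiLp.smul_apply, smul_eq_mul, Finset.sum_add_distrib,
      ← Finset.mul_sum]
    nlinarith

lemma mem_coordSimplex_iff {n : ℕ} {s : Set (Fin n)} {x : E n} :
    x ∈ coordSimplex s ↔ (∀ j, 0 ≤ x j) ∧ (∀ j ∉ s, x j = 0) ∧ ∑ j, x j ≤ 1 := by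
  classical
  constructor
  · refine fun hx => convexHull_min ?_ (convex_setOf_nonneg_supp_sum_le_one s) hx
    rintro _ (rfl | ⟨j, hj, rfl⟩)
    · simp
    · refine ⟨fun k => ?_, fun k hk => ?_, by simp⟩
      · simp only [PiLp.single_apply]; split_ifs <;> norm_num
      · simp only [PiLp.single_apply, ite_eq_right_iff]; rintro rfl; exact absurd hj hk
  · rintro ⟨h0, hs, h1⟩
    let w : Option (Fin n) → ℝ := fun o => o.elim (1 - ∑ j, x j) x
    let z : Option (Fin n) → E n := fun o => o.elim 0 fun j =>
      if j ∈ s then EuclideanSpace.single j 1 else 0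
    have hx : ∑ o, w o • z o = x := by
      rw [Fintype.sum_option]
      simp only [w, z, Option.elim, smul_zero, zero_add]
      conv_rhs => rw [← (EuclideanSpace.basisFun (Fin n) ℝ).sum_repr x]
      refine Finset.sum_congr rfl fun j _ => ?_
      by_cases hj : j ∈ s <;> simp [hj, hs]
    rw [← hx]
    refine (convex_convexHull ℝ _).sum_mem (fun o _ => ?_) ?_ (fun o _ => subset_convexHull ℝ _ ?_)
    · cases o <;> simp [w, h0, h1]
    · simp [w, Fintype.sum_option]
    · cases o with
      | none => exact Or.inl rfl
      | some j =>
        by_cases hj : j ∈ s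
        · exact Or.inr ⟨j, hj, by simp [z, hj]⟩
        · simp [z, hj]

lemma mem_coordSimplex_diff_singleton_iff {n : ℕ} {s : Set (Fin n)} {b : Fin n} {x : E n} :
    x ∈ coordSimplex (s \ {b}) ↔ x ∈ coordSimplex s ∧ x b = 0 := by
  simp only [mem_coordSimplex_iff, Set.mem_sdiff, Set.mem_singleton_iff, not_and_or, not_not]
  constructor
  · rintro ⟨h0, hs, h1⟩
    exact ⟨⟨h0, fun j hj => hs j (Or.inl hj), h1⟩, hs b (Or.inr rfl)⟩
  · rintro ⟨⟨h0, hs, h1⟩, hb⟩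
    exact ⟨h0, fun j hj => hj.elim (hs j) fun h => h ▸ hb, h1⟩

lemma shear_mem_coordSimplex_iff {n : ℕ} {s : Set (Fin n)} {a b d : Fin n} (hab : a ≠ b)
    (ha : a ∈ s) (hb : b ∈ s) (hd : d ∉ s) {c r : ℝ} (hc0 : 0 < c) (hc1 : c ≤ 1) (hr : 0 < r)
    {x y : E n} (hya : y a = c * x a) (hyb : y b = (1 - c) * x a + x b) (hyd : y d = r * x d)
    (hy : ∀ j, j ≠ a → j ≠ b → j ≠ d → y j = x j) :
    y ∈ coordSimplex s ∧ 0 ≤ x b ↔ x ∈ coordSimplex s := by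
  have hzero : ∀ j ∉ s, (y j = 0 ↔ x j = 0) := by
    intro j hj
    by_cases hjd : j = d
    · subst hjd; simp [hyd, hr.ne']
    · rw [hy j (ne_of_mem_of_not_mem ha hj).symm (ne_of_mem_of_not_mem hb hj).symm hjd]
  have hsum : x d = 0 → ∑ j, y j = ∑ j, x j := by
    intro hxd
    have : ∑ j, (y j - x j) = 0 := by
      rw [Fintype.sum_eq_add a b hab fun j hj => ?_]
      · rw [hya, hyb]; ring
      · by_cases hjd : j = d
        · subst hjd; simp [hyd, hxd]
        · simp [hy j hj.1 hj.2 hjd]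
    rwa [Finset.sum_sub_distrib, sub_eq_zero] at this
  have hnonneg : (∀ j, 0 ≤ y j) ∧ 0 ≤ x b ↔ ∀ j, 0 ≤ x j := by
    constructor
    · rintro ⟨hy0, hxb⟩ j
      by_cases hja : j = a
      · subst hja; exact (mul_nonneg_iff_of_pos_left hc0).1 (hya ▸ hy0 j)
      by_cases hjb : j = b
      · exact hjb ▸ hxb
      by_cases hjd : j = d
      · subst hjd; exact (mul_nonneg_iff_of_pos_left hr).1 (hyd ▸ hy0 j)
      · exact hy j hja hjb hjd ▸ hy0 j
    · intro hx0
      refine ⟨fun j => ?_, hx0 b⟩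
      by_cases hja : j = a
      · subst hja; rw [hya]; exact mul_nonneg hc0.le (hx0 j)
      by_cases hjb : j = b
      · subst hjb; rw [hyb]; exact add_nonneg (mul_nonneg (by linarith) (hx0 a)) (hx0 j)
      by_cases hjd : j = d
      · subst hjd; rw [hyd]; exact mul_nonneg hr.le (hx0 j)
      · rw [hy j hja hjb hjd]; exact hx0 j
  rw [mem_coordSimplex_iff, mem_coordSimplex_iff, ← hnonneg]
  constructor
  · rintro ⟨⟨hy0, hys, hy1⟩, hxb⟩
    have hxs : ∀ j ∉ s, x j = 0 := fun j hj => (hzero j hj).1 (hys j hj)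
    exact ⟨⟨hy0, hxb⟩, hxs, hsum (hxs d hd) ▸ hy1⟩
  · rintro ⟨⟨hy0, hxb⟩, hxs, hx1⟩
    exact ⟨⟨hy0, fun j hj => (hzero j hj).2 (hxs j hj), (hsum (hxs d hd)).symm ▸ hx1⟩, hxb⟩

lemma act_apply {n : ℕ} (M : Matrix (Fin n) (Fin n) ℝ) (x : E n) (k : Fin n) :
    act M x k = ∑ j, M k j * x j := rfl

lemma act_apply_of_supported_col_diag {n : ℕ} {M : Matrix (Fin n) (Fin n) ℝ} {a : Fin n}
    (hM : ∀ k j, j ≠ a → j ≠ k → M k j = 0) (x : E n) (k : Fin n) :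
    act M x k = if k = a then M k k * x k else M k a * x a + M k k * x k := by
  rw [act_apply]
  split_ifs with hk
  · subst hk
    exact Fintype.sum_eq_single k fun j hj => by rw [hM k j hj hj, zero_mul]
  · exact Fintype.sum_eq_add a k (Ne.symm hk) fun j hj => by rw [hM k j hj.1 hj.2, zero_mul]

lemma act_surjective {n : ℕ} {M : Matrix (Fin n) (Fin n) ℝ} (hM : IsUnit M.det) :
    Function.Surjective (act M) := fun y =>
  ⟨act M⁻¹ y, by
    simp [act, Matrix.toLpLin_apply, Matrix.mulVec_mulVec, Matrix.mul_nonsing_inv _ hM]⟩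

lemma image_act_eq_of_forall_mem_iff {n : ℕ} {M : Matrix (Fin n) (Fin n) ℝ} (hM : IsUnit M.det)
    {S U : Set (E n)} (h : ∀ x, act M x ∈ U ↔ x ∈ S) : act M '' S = U := by
  rw [← (act_surjective hM).image_preimage U]
  exact congrArg _ (Set.ext fun x => (h x).symm)

lemma Tk_eq_coordSimplex (n i : ℕ) : Tk n i = coordSimplex {j | (j : ℕ) < i} := rfl

lemma mem_hatT_iff {m i : ℕ} (hi : 1 ≤ i) {x : E (m + 2)} :
    x ∈ hatT (m + 2) i ↔ x ∈ Tk (m + 2) i ∧ x 1 = 0 := by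
  have : hatT (m + 2) i = coordSimplex ({j | (j : ℕ) < i} \ {1}) := by
    unfold hatT coordSimplex
    congr! 3
    ext j
    simp only [Set.mem_ofPred_eq, Set.mem_sdiff, Set.mem_singleton_iff, Fin.ext_iff, Fin.val_one]
    omega
  rw [this, mem_coordSimplex_diff_singleton_iff, Tk_eq_coordSimplex]

lemma inner_hNormal {m : ℕ} (l : ℝ) (x : E (m + 2)) :
    ⟪x, hNormal (m + 2) l⟫ = (1 - l) * x 0 - l * x 1 := by
  simp [hNormal, PiLp.inner_apply, Fin.sum_univ_succ, sub_eq_add_neg]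

section

/-! Coordinates are `0`-based (`x 0`, `x 1` are the paper's `x₁`, `x₂`), and the dimension is
written `m + 3` so that `0`, `1` and `Fin.last _` are distinct literals. -/

variable (m : ℕ) (l : ℝ)

lemma phi1_isLowerTriangular : (phi1 (m + 3) l).IsLowerTriangular := by
  intro j k (hjk : j < k)
  rw [Fin.lt_def] at hjk
  simp only [phi1, Matrix.of_apply, Fin.ext_iff]
  split_ifs <;> first | rfl | omega

lemma psi1_isUpperTriangular : (psi1 (m + 3) l).IsUpperTriangular := by
  intro j k (hjk : k < j)
  rw [Fin.lt_def] at hjk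
  simp only [psi1, Matrix.of_apply, Fin.ext_iff]
  split_ifs <;> first | rfl | omega

lemma act_phi1_apply (x : E (m + 3)) (k : Fin (m + 3)) :
    act (phi1 (m + 3) l) x k = if k = 0 then l * x k else if k = 1 then (1 - l) * x 0 + x k
      else if k = Fin.last _ then 1 / l * x k else x k := by
  rw [act_apply_of_supported_col_diag (a := 0)]
  · simp only [phi1, Matrix.of_apply, Fin.ext_iff, Fin.val_zero, Fin.val_one, Fin.val_last]
    split_ifs <;> first | omega | simp_all
  · intro k j hj hjk
    simp only [phi1, Matrix.of_apply, ne_eq, Fin.ext_iff, Fin.val_zero] at *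
    split_ifs <;> first | rfl | omega

lemma act_psi1_apply (x : E (m + 3)) (k : Fin (m + 3)) :
    act (psi1 (m + 3) l) x k = if k = 1 then (1 - l) * x k else if k = 0 then l * x 1 + x k
      else if k = Fin.last _ then 1 / (1 - l) * x k else x k := by
  rw [act_apply_of_supported_col_diag (a := 1)]
  · simp only [psi1, Matrix.of_apply, Fin.ext_iff, Fin.val_zero, Fin.val_one, Fin.val_last]
    split_ifs <;> first | omega | simp_all
  · intro k j hj hjk
    simp only [psi1, Matrix.of_apply, ne_eq, Fin.ext_iff, Fin.val_one] at *
    split_ifs <;> first | rfl | omega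

lemma inner_act_phi1_hNormal (x : E (m + 3)) :
    ⟪act (phi1 (m + 3) l) x, hNormal (m + 3) l⟫ = -(l * x 1) := by
  rw [inner_hNormal, act_phi1_apply, act_phi1_apply]
  simp only [↓reduceIte, one_ne_zero]
  ring

lemma inner_act_psi1_hNormal (x : E (m + 3)) :
    ⟪act (psi1 (m + 3) l) x, hNormal (m + 3) l⟫ = (1 - l) * x 0 := by
  rw [inner_hNormal, act_psi1_apply, act_psi1_apply]
  simp only [↓reduceIte, zero_ne_one]
  ring

variable {m l}

lemma det_phi1 (hl : l ≠ 0) : (phi1 (m + 3) l).det = 1 := by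
  rw [Matrix.det_of_isLowerTriangular _ (phi1_isLowerTriangular m l), Fin.prod_univ_castSucc,
    Fin.prod_univ_succ]
  simp [phi1, fun i : Fin (m + 1) => (Fin.is_lt i).ne, hl]

lemma det_psi1 (hl : l ≠ 1) : (psi1 (m + 3) l).det = 1 := by
  rw [Matrix.det_of_isUpperTriangular (psi1_isUpperTriangular m l), Fin.prod_univ_castSucc,
    Fin.prod_univ_succ, Fin.prod_univ_succ]
  simp [psi1, fun i : Fin m => (Fin.is_lt i).ne, sub_ne_zero.2 hl.symm]

lemma act_phi1_mem_Tk_iff (hl0 : 0 < l) (hl1 : l ≤ 1) {i : ℕ} (hi : 2 ≤ i) (hin : i < m + 3)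
    (x : E (m + 3)) : act (phi1 (m + 3) l) x ∈ Tk (m + 3) i ∧ 0 ≤ x 1 ↔ x ∈ Tk (m + 3) i := by
  refine shear_mem_coordSimplex_iff zero_ne_one (show 0 < i by omega) (show 1 < i by omega)
    (d := Fin.last _) (show ¬m + 2 < i by omega) hl0 hl1 (r := 1 / l) (by positivity) ?_ ?_ ?_ ?_
  · rw [act_phi1_apply, if_pos rfl]
  · rw [act_phi1_apply, if_neg one_ne_zero, if_pos rfl]
  · rw [act_phi1_apply]
    simp [Fin.ext_iff]
  · intro j hj0 hj1 hjd
    rw [act_phi1_apply, if_neg hj0, if_neg hj1, if_neg hjd]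

lemma act_psi1_mem_Tk_iff (hl0 : 0 ≤ l) (hl1 : l < 1) {i : ℕ} (hi : 2 ≤ i) (hin : i < m + 3)
    (x : E (m + 3)) : act (psi1 (m + 3) l) x ∈ Tk (m + 3) i ∧ 0 ≤ x 0 ↔ x ∈ Tk (m + 3) i := by
  refine shear_mem_coordSimplex_iff one_ne_zero (show 1 < i by omega) (show 0 < i by omega)
    (d := Fin.last _) (show ¬m + 2 < i by omega) (sub_pos.2 hl1) (by linarith) (r := 1 / (1 - l))
    (by simp [hl1]) ?_ ?_ ?_ ?_
  · rw [act_psi1_apply, if_pos rfl]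
  · rw [act_psi1_apply, if_neg zero_ne_one, if_pos rfl, sub_sub_cancel]
  · rw [act_psi1_apply]
    simp [Fin.ext_iff]
  · intro j hj1 hj0 hjd
    rw [act_psi1_apply, if_neg hj1, if_neg hj0, if_neg hjd]

end

/-- `φ₁, ψ₁ ∈ SL(n,ℝ)` and the triangulation of `T^i` by the
hyperplane `H` with normal `(1-λ)e₁ - λe₂`. -/
theorem triangulation_Ti {n : ℕ} (hn : 3 ≤ n) (l : ℝ) (hl0 : 0 < l) (hl1 : l < 1)
    (i : ℕ) (hi2 : 2 ≤ i) (hin : i < n) :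
    (phi1 n l).det = 1 ∧ (psi1 n l).det = 1
    ∧ Tk n i ∩ {x : E n | ⟪x, hNormal n l⟫ ≤ 0} = act (phi1 n l) '' Tk n i
    ∧ Tk n i ∩ {x : E n | 0 ≤ ⟪x, hNormal n l⟫} = act (psi1 n l) '' Tk n i
    ∧ Tk n i ∩ {x : E n | ⟪x, hNormal n l⟫ = 0} = act (phi1 n l) '' hatT n i := by
  obtain ⟨m, rfl⟩ : ∃ m, n = m + 3 := ⟨n - 3, by omega⟩
  have hφ : (phi1 (m + 3) l).det = 1 := det_phi1 hl0.ne'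
  have hψ : (psi1 (m + 3) l).det = 1 := det_psi1 hl1.ne
  refine ⟨hφ, hψ, ?_, ?_, ?_⟩
  · refine (image_act_eq_of_forall_mem_iff (by simp [hφ]) fun x => ?_).symm
    rw [Set.mem_inter_iff, Set.mem_ofPred_eq, inner_act_phi1_hNormal, neg_nonpos,
      mul_nonneg_iff_of_pos_left hl0]
    exact act_phi1_mem_Tk_iff hl0 hl1.le hi2 hin x
  · refine (image_act_eq_of_forall_mem_iff (by simp [hψ]) fun x => ?_).symm
    rw [Set.mem_inter_iff, Set.mem_ofPred_eq, inner_act_psi1_hNormal,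
      mul_nonneg_iff_of_pos_left (sub_pos.2 hl1)]
    exact act_psi1_mem_Tk_iff hl0.le hl1 hi2 hin x
  · refine (image_act_eq_of_forall_mem_iff (by simp [hφ]) fun x => ?_).symm
    rw [Set.mem_inter_iff, Set.mem_ofPred_eq, inner_act_phi1_hNormal, neg_eq_zero,
      mul_eq_zero, or_iff_right hl0.ne', mem_hatT_iff (by omega),
      ← act_phi1_mem_Tk_iff hl0 hl1.le hi2 hin x]
    exact ⟨fun ⟨h, h1⟩ => ⟨⟨h, h1.ge⟩, h1⟩, fun ⟨⟨h, _⟩, h1⟩ => ⟨h, h1⟩⟩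
end
end

section
/- Let P, Q be convex polytopes in ℝⁿ with P ∪ Q convex. Then conv{0, P∪Q} = conv{0,P} ∪ conv{0,Q} and conv{0, P∩Q} = conv{0,P} ∩ conv{0,Q}. Consequently, if Z is any valuation on polytopes containing the origin, then P ↦ Z(conv{0,P}) is a valuation on all polytopes. -/
open scoped RealInnerProductSpace

noncomputable section

/-! For the intersection of the cones: if `x = s • p = t • q` with `p ∈ P`, `q ∈ Q`, the segment
`[p, q]` lies in the convex set `P ∪ Q`, so by connectedness it meets `P ∩ Q`, and all of it lies on
the ray from `0` through `x`, beyond `x`. For the valuation property the only further input is that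
`P ∩ Q` is a polytope: an extreme point of `P ∩ Q` extreme in neither `P` nor `Q` would, by
intersecting segments from `P` to `Q` with `P ∩ Q`, lie strictly inside a segment of `P ∩ Q`. Hence
`P ∩ Q` has finitely many extreme points, and Krein–Milman applies. -/

open Set

section Segment

variable {V : Type*} [AddCommGroup V] [Module ℝ V]

lemma mem_segment_zero_iff {x z : V} : x ∈ segment ℝ 0 z ↔ ∃ t ∈ Icc (0 : ℝ) 1, t • z = x := by
  simp [segment_eq_image]

lemma mem_segment_zero_of_mem_segment {x p q r : V} (hp : x ∈ segment ℝ 0 p)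
    (hq : x ∈ segment ℝ 0 q) (hr : r ∈ segment ℝ p q) : x ∈ segment ℝ 0 r := by
  obtain ⟨s, ⟨hs0, hs1⟩, rfl⟩ := mem_segment_zero_iff.1 hp
  obtain ⟨t, ⟨ht0, ht1⟩, hts⟩ := mem_segment_zero_iff.1 hq
  rcases hs0.eq_or_lt with rfl | hs
  · simpa using left_mem_segment ℝ (0 : V) r
  rcases ht0.eq_or_lt with rfl | ht
  · simpa [← hts] using left_mem_segment ℝ (0 : V) r
  obtain ⟨a, b, ha, hb, hab, rfl⟩ := hr
  have hc : 1 ≤ a / s + b / t := by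
    have : a ≤ a / s ∧ b ≤ b / t := ⟨le_div_self ha hs hs1, le_div_self hb ht ht1⟩
    linarith
  have hr : a • p + b • q = (a / s + b / t) • (s • p) := by
    rw [add_smul, smul_smul, div_mul_cancel₀ _ hs.ne', ← hts, smul_smul, div_mul_cancel₀ _ ht.ne']
  refine mem_segment_zero_iff.2 ⟨(a / s + b / t)⁻¹, ⟨by positivity, inv_le_one_of_one_le₀ hc⟩, ?_⟩
  rw [hr, smul_smul, inv_mul_cancel₀ (by positivity), one_smul]

end Segment

section Topological

variable {V : Type*} [AddCommGroup V] [Module ℝ V] [TopologicalSpace V] [IsTopologicalAddGroup V]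
  [ContinuousSMul ℝ V] {K L : Set V}

lemma segment_inter_inter_nonempty (hK : IsClosed K) (hL : IsClosed L) {p q : V}
    (hseg : segment ℝ p q ⊆ K ∪ L) (hp : p ∈ K) (hq : q ∈ L) :
    (segment ℝ p q ∩ (K ∩ L)).Nonempty :=
  isPreconnected_closed_iff.1 (convex_segment p q).isPreconnected K L hK hL hseg
    ⟨p, left_mem_segment ℝ p q, hp⟩ ⟨q, right_mem_segment ℝ p q, hq⟩

lemma inter_nonempty_of_convex_union (hK : IsClosed K) (hL : IsClosed L)
    (hKL : Convex ℝ (K ∪ L)) (hKne : K.Nonempty) (hLne : L.Nonempty) : (K ∩ L).Nonempty := by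
  obtain ⟨p, hp⟩ := hKne
  obtain ⟨q, hq⟩ := hLne
  obtain ⟨r, -, hr⟩ :=
    segment_inter_inter_nonempty hK hL (hKL.segment_subset (.inl hp) (.inr hq)) hp hq
  exact ⟨r, hr⟩

lemma convexJoin_zero_inter (hK : IsClosed K) (hL : IsClosed L) (hKL : Convex ℝ (K ∪ L)) :
    convexJoin ℝ {0} (K ∩ L) = convexJoin ℝ {0} K ∩ convexJoin ℝ {0} L := by
  refine (subset_inter (convexJoin_mono_right inter_subset_left)
    (convexJoin_mono_right inter_subset_right)).antisymm ?_
  rintro x ⟨hxK, hxL⟩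
  simp only [convexJoin_singleton_left, mem_iUnion₂, exists_prop] at hxK hxL ⊢
  obtain ⟨p, hp, hxp⟩ := hxK
  obtain ⟨q, hq, hxq⟩ := hxL
  obtain ⟨r, hr, hrKL⟩ :=
    segment_inter_inter_nonempty hK hL (hKL.segment_subset (.inl hp) (.inr hq)) hp hq
  exact ⟨r, hrKL, mem_segment_zero_of_mem_segment hxp hxq hr⟩

end Topological

section Cone

variable {V : Type*} [AddCommGroup V] [Module ℝ V] {P Q : Set V}

lemma convexHull_zero_union_eq_convexJoin (hP : Convex ℝ P) (hPne : P.Nonempty) :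
    convexHull ℝ ({0} ∪ P) = convexJoin ℝ {0} P := by
  rw [singleton_union, convexHull_insert hPne, hP.convexHull_eq]

lemma convexHull_zero_union_union (hP : Convex ℝ P) (hQ : Convex ℝ Q) (hPne : P.Nonempty)
    (hQne : Q.Nonempty) (hPQ : Convex ℝ (P ∪ Q)) :
    convexHull ℝ ({0} ∪ (P ∪ Q)) = convexHull ℝ ({0} ∪ P) ∪ convexHull ℝ ({0} ∪ Q) := by
  rw [convexHull_zero_union_eq_convexJoin hPQ (hPne.mono subset_union_left),
    convexHull_zero_union_eq_convexJoin hP hPne, convexHull_zero_union_eq_convexJoin hQ hQne,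
    convexJoin_union_right]

variable [TopologicalSpace V] [IsTopologicalAddGroup V] [ContinuousSMul ℝ V]

lemma convexHull_zero_union_inter_of_convex_union (hP : Convex ℝ P) (hQ : Convex ℝ Q)
    (hPc : IsClosed P) (hQc : IsClosed Q) (hPne : P.Nonempty) (hQne : Q.Nonempty)
    (hPQ : Convex ℝ (P ∪ Q)) :
    convexHull ℝ ({0} ∪ (P ∩ Q)) = convexHull ℝ ({0} ∪ P) ∩ convexHull ℝ ({0} ∪ Q) := by
  rw [convexHull_zero_union_eq_convexJoin (hP.inter hQ)
      (inter_nonempty_of_convex_union hPc hQc hPQ hPne hQne),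
    convexHull_zero_union_eq_convexJoin hP hPne, convexHull_zero_union_eq_convexJoin hQ hQne,
    convexJoin_zero_inter hPc hQc hPQ]

end Cone

section ExtremePoints

variable {V : Type*} [AddCommGroup V] [Module ℝ V] {K L : Set V} {x u : V}

lemma eq_zero_of_add_smul_mem_of_sub_smul_mem (hx : x ∈ K.extremePoints ℝ) {s t : ℝ}
    (hs : 0 < s) (ht : 0 < t) (h₁ : x + s • u ∈ K) (h₂ : x - t • u ∈ K) : u = 0 := by
  have hseg : x ∈ openSegment ℝ (x + s • u) (x - t • u) :=
    ⟨t / (s + t), s / (s + t), by positivity, by positivity, by field_simp; ring,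
      by match_scalars <;> field_simp <;> ring⟩
  simpa [hs.ne'] using hx.2 h₁ h₂ hseg

lemma exists_add_sub_mem_of_notMem_extremePoints (hK : Convex ℝ K) (hx : x ∈ K)
    (hxK : x ∉ K.extremePoints ℝ) : ∃ u ≠ 0, x + u ∈ K ∧ x - u ∈ K := by
  rw [mem_extremePoints] at hxK
  push Not at hxK
  obtain ⟨y, hy, z, hz, ⟨a, b, ha, hb, hab, rfl⟩, hyz⟩ := hxK hx
  have hzy : z ≠ y := by
    rintro rfl
    exact hyz (by rw [← add_smul, hab, one_smul]) (by rw [← add_smul, hab, one_smul])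
  set m := min a b
  have hm : 0 < m := lt_min ha hb
  refine ⟨m • (z - y), smul_ne_zero hm.ne' (sub_ne_zero.2 hzy), ?_, ?_⟩
  · convert hK hy hz (a := a - m) (b := b + m) (sub_nonneg.2 (min_le_left a b)) (by positivity)
      (by linarith) using 1
    module
  · convert hK hy hz (a := a + m) (b := b - m) (by positivity) (sub_nonneg.2 (min_le_right a b))
      (by linarith) using 1
    module

lemma exists_add_sub_mem_add_notMem_of_mem_extremePoints_inter (hK : Convex ℝ K)
    (hx : x ∈ (K ∩ L).extremePoints ℝ) (hxK : x ∉ K.extremePoints ℝ) :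
    ∃ u ≠ 0, x + u ∈ K ∧ x - u ∈ K ∧ x + u ∉ L := by
  obtain ⟨u, hu, hu₁, hu₂⟩ := exists_add_sub_mem_of_notMem_extremePoints hK hx.1.1 hxK
  by_cases huL : x + u ∈ L
  · refine ⟨-u, neg_ne_zero.2 hu, by rwa [← sub_eq_add_neg], by rwa [sub_neg_eq_add],
      fun h => hu (eq_zero_of_add_smul_mem_of_sub_smul_mem hx one_pos one_pos ?_ ?_)⟩
    · simpa using (⟨hu₁, huL⟩ : x + u ∈ K ∩ L)
    · simpa [← sub_eq_add_neg] using (⟨hu₂, by rwa [← sub_eq_add_neg] at h⟩ : x - u ∈ K ∩ L)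
  · exact ⟨u, hu, hu₁, hu₂, huL⟩

variable [TopologicalSpace V] [IsTopologicalAddGroup V] [ContinuousSMul ℝ V]

lemma exists_pos_smul_add_mem_inter (hK : Convex ℝ K) (hL : Convex ℝ L) (hKc : IsClosed K)
    (hLc : IsClosed L) (hKL : Convex ℝ (K ∪ L)) {v : V} (hu : x + u ∈ K) (huL : x + u ∉ L)
    (hv₁ : x + v ∈ L) (hv₂ : x - v ∈ L) (hvK : x + v ∉ K) :
    ∃ σ : ℝ, 0 < σ ∧ x + σ • u ∈ K ∩ L := by
  obtain ⟨c, ⟨a, b, ha, hb, hab, rfl⟩, hcK, hcL⟩ :=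
    segment_inter_inter_nonempty hKc hLc (hKL.segment_subset (.inl hu) (.inr hv₁)) hu hv₁
  obtain ⟨d, ⟨a', b', ha', hb', hab', rfl⟩, hdK, hdL⟩ :=
    segment_inter_inter_nonempty hKc hLc (hKL.segment_subset (.inl hu) (.inr hv₂)) hu hv₂
  have hb : 0 < b := hb.lt_of_ne' fun hb0 => huL <| by
    obtain rfl : a = 1 := by linarith
    simpa [hb0] using hcL
  have ha : 0 < a := ha.lt_of_ne' fun ha0 => hvK <| by
    obtain rfl : b = 1 := by linarith
    simpa [ha0] using hcK
  have hb' : 0 < b' := hb'.lt_of_ne' fun hb0 => huL <| by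
    obtain rfl : a' = 1 := by linarith
    simpa [hb0] using hdL
  -- averaging the two points with weights `b' : b` cancels their `v`-components
  refine ⟨(b' * a + b * a') / (b + b'), by positivity, ?_⟩
  convert (hK.inter hL) ⟨hcK, hcL⟩ ⟨hdK, hdL⟩ (a := b' / (b + b')) (b := b / (b + b'))
    (by positivity) (by positivity) (by field_simp; ring) using 1
  match_scalars
  · field_simp
    linear_combination -(b' * hab + b * hab')
  · field_simp
  · field_simp
    ring

theorem extremePoints_inter_subset_union (hK : Convex ℝ K) (hL : Convex ℝ L) (hKc : IsClosed K)
    (hLc : IsClosed L) (hKL : Convex ℝ (K ∪ L)) :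
    (K ∩ L).extremePoints ℝ ⊆ K.extremePoints ℝ ∪ L.extremePoints ℝ := by
  intro x hx
  by_contra! hxKL
  rw [mem_union, not_or] at hxKL
  obtain ⟨u, hu, hu₁, hu₂, huL⟩ :=
    exists_add_sub_mem_add_notMem_of_mem_extremePoints_inter hK hx hxKL.1
  obtain ⟨v, -, hv₁, hv₂, hvK⟩ :=
    exists_add_sub_mem_add_notMem_of_mem_extremePoints_inter hL (inter_comm K L ▸ hx) hxKL.2
  obtain ⟨σ, hσ, hσKL⟩ := exists_pos_smul_add_mem_inter hK hL hKc hLc hKL hu₁ huL hv₁ hv₂ hvK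
  obtain ⟨τ, hτ, hτKL⟩ : ∃ τ : ℝ, 0 < τ ∧ x - τ • u ∈ K ∩ L := by
    by_cases hu₂L : x - u ∈ L
    · exact ⟨1, one_pos, by simpa using (⟨hu₂, hu₂L⟩ : x - u ∈ K ∩ L)⟩
    · obtain ⟨τ, hτ, h⟩ := exists_pos_smul_add_mem_inter hK hL hKc hLc hKL (u := -u)
        (by rwa [← sub_eq_add_neg]) (by rwa [← sub_eq_add_neg]) hv₁ hv₂ hvK
      exact ⟨τ, hτ, by rwa [smul_neg, ← sub_eq_add_neg] at h⟩
  exact hu (eq_zero_of_add_smul_mem_of_sub_smul_mem hx hσ hτ hσKL hτKL)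

end ExtremePoints

namespace IsPolytope

variable {n : ℕ} {P Q : Set (E n)}

lemma convex (hP : IsPolytope P) : Convex ℝ P := by
  obtain ⟨S, -, rfl⟩ := hP
  exact convex_convexHull ℝ _

lemma isCompact_s18 (hP : IsPolytope P) : IsCompact P := by
  obtain ⟨S, -, rfl⟩ := hP
  exact S.finite_toSet.isCompact_convexHull (𝕜 := ℝ)

lemma isClosed (hP : IsPolytope P) : IsClosed P :=
  hP.isCompact_s18.isClosed

lemma nonempty_s18 (hP : IsPolytope P) : P.Nonempty := by
  obtain ⟨S, hS, rfl⟩ := hP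
  exact (Finset.coe_nonempty.2 hS).convexHull

lemma of_finite_extremePoints (hP : IsCompact P) (hPc : Convex ℝ P) (hPne : P.Nonempty)
    (hfin : (P.extremePoints ℝ).Finite) : IsPolytope P := by
  refine ⟨hfin.toFinset, by simpa using hP.extremePoints_nonempty hPne, ?_⟩
  rw [hfin.coe_toFinset, ← (hfin.isClosed_convexHull ℝ).closure_eq,
    closure_convexHull_extremePoints hP hPc]

lemma convexHull_zero_union (hP : IsPolytope P) : IsPolytope (convexHull ℝ ({0} ∪ P)) := by
  obtain ⟨S, -, rfl⟩ := hP
  refine ⟨insert 0 S, Finset.insert_nonempty _ _, ?_⟩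
  rw [convexHull_convexHull_union_right, Finset.coe_insert, insert_eq]

lemma union (hP : IsPolytope P) (hQ : IsPolytope Q) (hPQ : Convex ℝ (P ∪ Q)) :
    IsPolytope (P ∪ Q) := by
  obtain ⟨S, hS, rfl⟩ := hP
  obtain ⟨T, -, rfl⟩ := hQ
  refine ⟨S ∪ T, hS.mono Finset.subset_union_left, ?_⟩
  rw [Finset.coe_union]
  exact (union_subset (convexHull_mono subset_union_left)
    (convexHull_mono subset_union_right)).antisymm
    (convexHull_min (union_subset_union (subset_convexHull ℝ _) (subset_convexHull ℝ _)) hPQ)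

lemma inter (hP : IsPolytope P) (hQ : IsPolytope Q) (hPQ : Convex ℝ (P ∪ Q)) :
    IsPolytope (P ∩ Q) := by
  refine of_finite_extremePoints (hP.isCompact_s18.inter_right hQ.isClosed) (hP.convex.inter hQ.convex)
    (inter_nonempty_of_convex_union hP.isClosed hQ.isClosed hPQ hP.nonempty_s18 hQ.nonempty_s18) ?_
  have hext := extremePoints_inter_subset_union hP.convex hQ.convex hP.isClosed hQ.isClosed hPQ
  obtain ⟨S, -, rfl⟩ := hP
  obtain ⟨T, -, rfl⟩ := hQ
  exact (S.finite_toSet.union T.finite_toSet).subset <| hext.trans <|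
    union_subset_union extremePoints_convexHull_subset extremePoints_convexHull_subset

end IsPolytope

/-- `conv{0,·}` commutes with unions and intersections of polytopes with
convex union, and consequently `P ↦ Z(conv{0,P})` is a valuation. -/
theorem convexHull_zero_union_inter {n : ℕ} (P Q : Set (E n))
    (hP : IsPolytope P) (hQ : IsPolytope Q) (hPQ : Convex ℝ (P ∪ Q)) :
    convexHull ℝ ({0} ∪ (P ∪ Q)) = convexHull ℝ ({0} ∪ P) ∪ convexHull ℝ ({0} ∪ Q)
    ∧ convexHull ℝ ({0} ∪ (P ∩ Q)) = convexHull ℝ ({0} ∪ P) ∩ convexHull ℝ ({0} ∪ Q)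
    ∧ ∀ Z : Set (E n) → E n,
        (∀ A B : Set (E n), IsPolytope A → IsPolytope B →
          IsPolytope (A ∪ B) → IsPolytope (A ∩ B) → (0 : E n) ∈ A → (0 : E n) ∈ B →
          Z A + Z B = Z (A ∪ B) + Z (A ∩ B)) →
        Z (convexHull ℝ ({0} ∪ P)) + Z (convexHull ℝ ({0} ∪ Q))
          = Z (convexHull ℝ ({0} ∪ (P ∪ Q))) + Z (convexHull ℝ ({0} ∪ (P ∩ Q))) := by
  have hunion := convexHull_zero_union_union hP.convex hQ.convex hP.nonempty_s18 hQ.nonempty_s18 hPQ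
  have hinter := convexHull_zero_union_inter_of_convex_union hP.convex hQ.convex hP.isClosed
    hQ.isClosed hP.nonempty_s18 hQ.nonempty_s18 hPQ
  refine ⟨hunion, hinter, fun Z hZ => ?_⟩
  have h0 (C : Set (E n)) : (0 : E n) ∈ convexHull ℝ ({0} ∪ C) :=
    subset_convexHull ℝ _ (.inl rfl)
  rw [hunion, hinter]
  exact hZ _ _ hP.convexHull_zero_union hQ.convexHull_zero_union
    (hunion ▸ (hP.union hQ hPQ).convexHull_zero_union)
    (hinter ▸ (hP.inter hQ hPQ).convexHull_zero_union) (h0 P) (h0 Q)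
end
end
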